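/- arXiv:2502.13375 — 3 statements merged into one kernel-verified Lean document; each statement's English description precedes it below -/
import Mathlib

section
/- Let c be an equilibrium under the difference-seeking utility U_# on a finite simple graph G with minimum degree δ, and let u, v be vertices with c(u) ≠ c(v). Then U_#(c,u) + U_#(c,v) ≥ δ. -/
/-!
Every neighbour of `v` either has a type different from `v`'s, or shares it and then differs
from `v` once `v` has taken the type of `u`; hence `deg v ≤ U_#(c,v) + U_#(c',v)` for the swapped
coloring `c'`. At an equilibrium one of the two agents does not gain from the swap, say
`U_#(c',v) ≤ U_#(c,u)`, and `δ ≤ deg v` gives the bound.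
-/

open SimpleGraph Finset

/-- The coloring obtained from `c` by swapping the colors (agents) at `u` and `v`. -/
def swapColoring {V : Type*} [DecidableEq V] {t : ℕ} (c : V → Fin t) (u v : V) : V → Fin t :=
  fun w => if w = u then c v else if w = v then c u else c w

/-- The binary utility `U_b`: 1 if some neighbor has a different type, 0 otherwise. -/
def Ub {V : Type*} [Fintype V] (G : SimpleGraph V) [DecidableRel G.Adj]
    {t : ℕ} (c : V → Fin t) (v : V) : ℕ :=
  if ∃ w ∈ G.neighborFinset v, c w ≠ c v then 1 else 0

/-- The difference-seeking utility `U_#`: the number of neighbors of a different type. -/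
def Usharp {V : Type*} [Fintype V] (G : SimpleGraph V) [DecidableRel G.Adj]
    {t : ℕ} (c : V → Fin t) (v : V) : ℕ :=
  ((G.neighborFinset v).filter fun w => c w ≠ c v).card

/-- `T_c(v)`: the set of types present in the neighborhood of `v`. -/
def typesIn {V : Type*} [Fintype V] (G : SimpleGraph V) [DecidableRel G.Adj]
    {t : ℕ} (c : V → Fin t) (v : V) : Finset (Fin t) :=
  (G.neighborFinset v).image c

/-- The variety-seeking utility `U_τ`: the number of types other than `c v` in the
neighborhood of `v`. -/
def Utau {V : Type*} [Fintype V] (G : SimpleGraph V) [DecidableRel G.Adj]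
    {t : ℕ} (c : V → Fin t) (v : V) : ℕ :=
  ((typesIn G c v).erase (c v)).card

/-- The swap of `u` and `v` is improving under utility `U`. -/
def ImprovingSwap {V : Type*} [DecidableEq V] {t : ℕ}
    (U : (V → Fin t) → V → ℕ) (c : V → Fin t) (u v : V) : Prop :=
  U c u < U (swapColoring c u v) v ∧ U c v < U (swapColoring c u v) u

/-- `c` is an equilibrium under the utility `U`: no improving swap exists. -/
def Equilibrium {V : Type*} [DecidableEq V] {t : ℕ}
    (U : (V → Fin t) → V → ℕ) (c : V → Fin t) : Prop :=
  ∀ u v : V, c u ≠ c v → ¬ ImprovingSwap U c u v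

/-- The number of monochromatic edges of `c`. -/
def monoCount {V : Type*} [Fintype V] [DecidableEq V] (G : SimpleGraph V) [DecidableRel G.Adj]
    {t : ℕ} (c : V → Fin t) : ℕ :=
  (G.edgeFinset.filter fun e => (e.map c).IsDiag).card

/-- The number of colorful edges of `c`. -/
def ceCount {V : Type*} [Fintype V] [DecidableEq V] (G : SimpleGraph V) [DecidableRel G.Adj]
    {t : ℕ} (c : V → Fin t) : ℕ :=
  (G.edgeFinset.filter fun e => ¬ (e.map c).IsDiag).card

/-- The cycle graph on `ZMod n`: `i` adjacent to `i + 1` and `i - 1`. -/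
def cycleZMod (n : ℕ) : SimpleGraph (ZMod n) := SimpleGraph.circulantGraph {1}

instance (n : ℕ) : DecidableRel (cycleZMod n).Adj := fun a b =>
  decidable_of_iff (a ≠ b ∧ (a - b = 1 ∨ b - a = 1)) (by simp [cycleZMod])

instance {α β : Type*} (G : SimpleGraph α) (H : SimpleGraph β)
    [DecidableRel G.Adj] [DecidableRel H.Adj] [DecidableEq α] [DecidableEq β] :
    DecidableRel (G □ H).Adj := fun x y =>
  decidable_of_iff (G.Adj x.1 y.1 ∧ x.2 = y.2 ∨ H.Adj x.2 y.2 ∧ x.1 = y.1)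
    (SimpleGraph.boxProd_adj).symm

section Swap

variable {V : Type*} [DecidableEq V] {t : ℕ} (c : V → Fin t) (u v : V)

theorem swapColoring_comm : swapColoring c u v = swapColoring c v u := by
  funext w
  unfold swapColoring
  split_ifs <;> simp_all

theorem swapColoring_apply_right (huv : u ≠ v) : swapColoring c u v v = c u := by
  simp [swapColoring, huv.symm]

theorem swapColoring_apply_of_ne {w : V} (hwu : w ≠ u) (hwv : w ≠ v) :
    swapColoring c u v w = c w := by
  simp [swapColoring, hwu, hwv]

end Swap

section Usharp

variable {V : Type*} [Fintype V] [DecidableEq V] (G : SimpleGraph V) [DecidableRel G.Adj]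
  {t : ℕ} {c : V → Fin t} {u v : V}

theorem degree_le_Usharp_add_Usharp_swapColoring (huv : c u ≠ c v) :
    G.degree v ≤ Usharp G c v + Usharp G (swapColoring c u v) v := by
  have hne : u ≠ v := fun h => huv (congrArg c h)
  have hsame : ((G.neighborFinset v).filter fun w => ¬c w ≠ c v) ⊆
      (G.neighborFinset v).filter fun w => swapColoring c u v w ≠ swapColoring c u v v := by
    intro w hw
    rw [mem_filter, not_not, mem_neighborFinset] at hw
    obtain ⟨hadj, hw⟩ := hw
    have hwu : w ≠ u := by rintro rfl; exact huv hw
    rw [mem_filter, mem_neighborFinset, swapColoring_apply_of_ne c u v hwu hadj.ne',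
      swapColoring_apply_right c u v hne, hw]
    exact ⟨hadj, huv.symm⟩
  rw [← card_neighborFinset_eq_degree,
    ← card_filter_add_card_filter_not fun w => c w ≠ c v]
  exact Nat.add_le_add_left (card_le_card hsame) _

theorem minDegree_le_Usharp_add_Usharp_of_swap_le (huv : c u ≠ c v)
    (hv : Usharp G (swapColoring c u v) v ≤ Usharp G c u) :
    G.minDegree ≤ Usharp G c u + Usharp G c v :=
  calc G.minDegree ≤ G.degree v := G.minDegree_le_degree v
    _ ≤ Usharp G c v + Usharp G (swapColoring c u v) v :=
      degree_le_Usharp_add_Usharp_swapColoring G huv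
    _ ≤ Usharp G c u + Usharp G c v := by omega

end Usharp

theorem stmt0_general {V : Type*} [Fintype V] [DecidableEq V] (G : SimpleGraph V) [DecidableRel G.Adj]
    {t : ℕ} (c : V → Fin t) (heq : Equilibrium (Usharp G) c)
    (u v : V) (huv : c u ≠ c v) :
    G.minDegree ≤ Usharp G c u + Usharp G c v := by
  have hswap := heq u v huv
  rw [ImprovingSwap, not_and_or, not_lt, not_lt] at hswap
  rcases hswap with hv | hu
  · exact minDegree_le_Usharp_add_Usharp_of_swap_le G huv hv
  · rw [swapColoring_comm] at hu
    rw [add_comm]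
    exact minDegree_le_Usharp_add_Usharp_of_swap_le G huv.symm hu

theorem stmt0 {V : Type*} [Fintype V] [DecidableEq V] (G : SimpleGraph V) [DecidableRel G.Adj]
    {t : ℕ} (ht : 2 ≤ t) (c : V → Fin t) (heq : Equilibrium (Usharp G) c)
    (u v : V) (huv : c u ≠ c v) :
    G.minDegree ≤ Usharp G c u + Usharp G c v :=
  stmt0_general G c heq u v huv
end

section
/- Let G be a finite simple graph, let c be a coloring, and let c' be obtained from c by an improving swap under the difference-seeking utility U_#. Then the number of monochromatic edges of c' is at most the number of monochromatic edges of c minus 2. Consequently the swap game under U_# is a potential game with the number of monochromatic edges as potential. -/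
open SimpleGraph Finset

/-! Only edges at `u` or `v` can change status under the swap. As `c u ≠ c v`, the edge `uv`
(if present) is colorful before and after, so the monochromatic edges at `u` number
`deg u - U_#(·, u)`, and likewise at `v`. An improving swap raises `U_#` at both endpoints by at
least one, so at least two monochromatic edges disappear. -/

lemma not_isDiag_map_of_mem {V α : Type*} {d : V → α} {u v : V} {e : Sym2 V} (huv : d u ≠ d v)
    (hu : u ∈ e) (hv : v ∈ e) : ¬(e.map d).IsDiag := by
  induction e using Sym2.ind with
  | _ p q =>
    rw [Sym2.map_mk, Sym2.mk_isDiag_iff]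
    rcases Sym2.mem_iff.mp hu with rfl | rfl <;> rcases Sym2.mem_iff.mp hv with rfl | rfl <;>
      grind

section MonochromaticEdges

variable {V : Type*} [Fintype V] [DecidableEq V] (G : SimpleGraph V) [DecidableRel G.Adj]
  {t : ℕ}

lemma card_monochromatic_incident_add_Usharp (d : V → Fin t) (x : V) :
    #{e ∈ G.edgeFinset | (e.map d).IsDiag ∧ x ∈ e} + Usharp G d x = G.degree x := by
  have hincident : {e ∈ G.edgeFinset | (e.map d).IsDiag ∧ x ∈ e}
      = {w ∈ G.neighborFinset x | d w = d x}.image fun w => s(x, w) := by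
    ext e
    induction e using Sym2.ind with
    | _ p q =>
      simp only [mem_filter, mem_edgeFinset, mem_edgeSet, Sym2.map_mk, Sym2.mk_isDiag_iff,
        Sym2.mem_iff, mem_image, mem_neighborFinset, Sym2.eq_iff]
      grind [G.adj_symm]
  rw [hincident, card_image_of_injective _ (fun _ _ => Sym2.congr_right.mp), Usharp,
    card_filter_add_card_filter_not, card_neighborFinset_eq_degree]

lemma monoCount_eq_of_ne (d : V → Fin t) {u v : V} (huv : d u ≠ d v) :
    monoCount G d = #{e ∈ G.edgeFinset | (e.map d).IsDiag ∧ u ∉ e ∧ v ∉ e}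
      + #{e ∈ G.edgeFinset | (e.map d).IsDiag ∧ u ∈ e}
      + #{e ∈ G.edgeFinset | (e.map d).IsDiag ∧ v ∈ e} := by
  set S := {e ∈ G.edgeFinset | (e.map d).IsDiag}
  have hu := card_filter_add_card_filter_not (s := S) (p := (u ∈ ·))
  have hv := card_filter_add_card_filter_not (s := {e ∈ S | u ∉ e}) (p := (v ∈ ·))
  have hv_only :
      {e ∈ {e ∈ S | u ∉ e} | v ∈ e} = {e ∈ G.edgeFinset | (e.map d).IsDiag ∧ v ∈ e} := by
    ext e
    simp only [S, mem_filter]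
    have hnot_both := fun hu hv => not_isDiag_map_of_mem huv (e := e) hu hv
    tauto
  simp only [S, filter_filter, and_assoc] at hu hv hv_only
  rw [hv_only] at hv
  rw [monoCount]
  omega

lemma filter_monochromatic_avoiding_congr {d d' : V → Fin t} {u v : V}
    (h : ∀ w, w ≠ u → w ≠ v → d' w = d w) :
    {e ∈ G.edgeFinset | (e.map d').IsDiag ∧ u ∉ e ∧ v ∉ e}
      = {e ∈ G.edgeFinset | (e.map d).IsDiag ∧ u ∉ e ∧ v ∉ e} := by
  refine filter_congr fun e _ => and_congr_left fun ⟨hu, hv⟩ => ?_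
  rw [Sym2.map_congr fun w hw => h w (ne_of_mem_of_not_mem hw hu) (ne_of_mem_of_not_mem hw hv)]

end MonochromaticEdges

lemma swapColoring_of_ne {V : Type*} [DecidableEq V] {t : ℕ} (c : V → Fin t) {u v w : V}
    (hu : w ≠ u) (hv : w ≠ v) : swapColoring c u v w = c w := by
  simp [swapColoring, hu, hv]

theorem stmt9_general {V : Type*} [Fintype V] [DecidableEq V] (G : SimpleGraph V) [DecidableRel G.Adj]
    {t : ℕ} (c : V → Fin t)
    (u v : V) (huv : c u ≠ c v) (himp : ImprovingSwap (Usharp G) c u v) :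
    monoCount G (swapColoring c u v) + 2 ≤ monoCount G c := by
  obtain ⟨hgain_v, hgain_u⟩ := himp
  have hne : u ≠ v := ne_of_apply_ne c huv
  have hswap : swapColoring c u v u ≠ swapColoring c u v v := by
    simpa [swapColoring, hne.symm] using huv.symm
  rw [monoCount_eq_of_ne G c huv, monoCount_eq_of_ne G _ hswap,
    filter_monochromatic_avoiding_congr G fun w => swapColoring_of_ne c]
  have hc_u := card_monochromatic_incident_add_Usharp G c u
  have hc_v := card_monochromatic_incident_add_Usharp G c v
  have hswap_u := card_monochromatic_incident_add_Usharp G (swapColoring c u v) u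
  have hswap_v := card_monochromatic_incident_add_Usharp G (swapColoring c u v) v
  omega

theorem stmt9 {V : Type*} [Fintype V] [DecidableEq V] (G : SimpleGraph V) [DecidableRel G.Adj]
    {t : ℕ} (ht : 2 ≤ t) (c : V → Fin t)
    (u v : V) (huv : c u ≠ c v) (himp : ImprovingSwap (Usharp G) c u v) :
    monoCount G (swapColoring c u v) + 2 ≤ monoCount G c :=
  stmt9_general G c u v huv himp
end

section
/- Let C_{2k} be the cycle on 2k vertices (k ≥ 3) and let c be a coloring with 2 types where each color class has size exactly k. If c is an equilibrium under the difference-seeking utility U_#, then 3·sw(c, U_#) ≥ 8k. -/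
open SimpleGraph Finset

/-!
On the cycle, `∑ v, U_#(c, v)` is twice the number of bichromatic edges `{v, v + 1}`, so it
suffices to show that at most a third of the `2k` edges are monochromatic.

If some vertex `j` is the middle of a monochromatic run of length three, then every vertex of
another colour already has both neighbours of a different colour: otherwise swapping it with `j`
strictly raises both utilities. With two colours of size `k` this makes all `2k` edges
bichromatic. Otherwise every monochromatic run has length at most two, and an equilibrium also
excludes the pattern `a a b b` (swapping the middle pair gives `a b a b`). Hence any two
monochromatic edges are at distance at least three, so there are at most `2k / 3` of them.
-/

section Cycle

variable {n : ℕ}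

lemma ZMod.natCast_ne_zero_of_pos_of_lt {m : ℕ} (hm : 0 < m) (hmn : m < n) :
    (m : ZMod n) ≠ 0 := by
  rw [Ne, ZMod.natCast_eq_zero_iff]
  exact fun h => absurd (Nat.le_of_dvd hm h) (by omega)

lemma cycleZMod_neighborFinset [NeZero n] (hn : 2 ≤ n) (v : ZMod n) :
    (cycleZMod n).neighborFinset v = {v + 1, v - 1} := by
  have h1 : (1 : ZMod n) ≠ 0 := by exact_mod_cast ZMod.natCast_ne_zero_of_pos_of_lt one_pos hn
  ext w
  rw [mem_neighborFinset]
  simp only [cycleZMod, circulantGraph_adj, Set.mem_singleton_iff, mem_insert, mem_singleton]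
  grind

lemma usharp_cycleZMod [NeZero n] (hn : 3 ≤ n) {t : ℕ} (c : ZMod n → Fin t) (v : ZMod n) :
    Usharp (cycleZMod n) c v
      = (if c (v + 1) ≠ c v then 1 else 0) + (if c (v - 1) ≠ c v then 1 else 0) := by
  have h2 : (2 : ZMod n) ≠ 0 := by exact_mod_cast ZMod.natCast_ne_zero_of_pos_of_lt two_pos hn
  have hne : v + 1 ≠ v - 1 := fun h => h2 (by linear_combination h)
  rw [Usharp, cycleZMod_neighborFinset (by omega), filter_insert, filter_singleton]
  split_ifs <;> simp [hne]

lemma sum_usharp_cycleZMod [NeZero n] (hn : 3 ≤ n) {t : ℕ} (c : ZMod n → Fin t) :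
    ∑ v, Usharp (cycleZMod n) c v = 2 * #{v | c (v + 1) ≠ c v} := by
  have hshift : ∑ v : ZMod n, (if c (v - 1) ≠ c v then 1 else 0)
      = ∑ v : ZMod n, (if c (v + 1) ≠ c v then 1 else 0) := by
    rw [← Equiv.sum_comp (Equiv.addRight (1 : ZMod n))]
    simp only [Equiv.coe_addRight, add_sub_cancel_right, ne_comm]
  simp only [usharp_cycleZMod hn, sum_add_distrib, hshift, card_filter]
  ring

lemma two_mul_card_le_card_of_add_one_notMem {s d : Finset (ZMod n)}
    (hs : ∀ v ∈ s, v + 1 ∉ s) (hsd : ∀ v ∈ s, v ∈ d ∧ v - 1 ∈ d) : 2 * #s ≤ #d := by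
  have hdisj : Disjoint s (s.image (· - 1)) := by
    simp only [Finset.disjoint_left, mem_image, not_exists, not_and]
    rintro _ hw v hv rfl
    exact hs _ hw (by simpa using hv)
  calc 2 * #s = #(s ∪ s.image (· - 1)) := by
        rw [card_union_of_disjoint hdisj, card_image_of_injective _ sub_left_injective, two_mul]
    _ ≤ #d := card_le_card <| union_subset (fun v hv => (hsd v hv).1) <| by
        simpa only [image_subset_iff] using fun v hv => (hsd v hv).2

lemma three_mul_card_le_of_add_one_add_two_notMem [NeZero n] {s : Finset (ZMod n)}
    (hs₁ : ∀ v ∈ s, v + 1 ∉ s) (hs₂ : ∀ v ∈ s, v + 2 ∉ s) : 3 * #s ≤ n := by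
  have hdisj₁ : Disjoint s (s.image (· + 1)) := by
    simp only [Finset.disjoint_left, mem_image, not_exists, not_and]
    rintro _ hw v hv rfl
    exact hs₁ v hv hw
  have hdisj₂ : Disjoint s (s.image (· + 2)) := by
    simp only [Finset.disjoint_left, mem_image, not_exists, not_and]
    rintro _ hw v hv rfl
    exact hs₂ v hv hw
  have hdisj₁₂ : Disjoint (s.image (· + 1)) (s.image (· + 2)) := by
    refine Finset.disjoint_left.2 fun _ hv hw => ?_
    obtain ⟨v, hv, rfl⟩ := mem_image.1 hv
    obtain ⟨w, hw, hwv⟩ := mem_image.1 hw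
    exact hs₁ w hw (by rwa [show w + 1 = v by linear_combination hwv])
  calc 3 * #s = #(s ∪ s.image (· + 1) ∪ s.image (· + 2)) := by
        rw [card_union_of_disjoint (disjoint_union_left.2 ⟨hdisj₂, hdisj₁₂⟩),
          card_union_of_disjoint hdisj₁, card_image_of_injective _ (add_left_injective _),
          card_image_of_injective _ (add_left_injective _)]
        ring
    _ ≤ n := (card_le_univ _).trans (ZMod.card n).le

variable [NeZero n] {t : ℕ} {c : ZMod n → Fin t}

lemma Equilibrium.cycleZMod_not_aabb (hn : 3 ≤ n) (heq : Equilibrium (Usharp (cycleZMod n)) c)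
    (u : ZMod n) (hl : c (u - 1) = c u) (hm : c (u + 1) ≠ c u) : c (u + 2) ≠ c (u + 1) := by
  have h1 : (1 : ZMod n) ≠ 0 := by
    exact_mod_cast ZMod.natCast_ne_zero_of_pos_of_lt one_pos (by omega)
  have h2 : (2 : ZMod n) ≠ 0 := by exact_mod_cast ZMod.natCast_ne_zero_of_pos_of_lt two_pos hn
  have h21 : (2 : ZMod n) ≠ 1 := fun h => h1 (by linear_combination h)
  intro hr
  refine heq u (u + 1) hm.symm ⟨?_, ?_⟩ <;>
    simp [usharp_cycleZMod hn, swapColoring, add_assoc, one_add_one_eq_two, sub_eq_iff_eq_add,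
      h1, h2, h21, hl, hm, hm.symm, hr]

lemma Equilibrium.cycleZMod_isolated_of_block (hn : 3 ≤ n)
    (heq : Equilibrium (Usharp (cycleZMod n)) c) {j : ZMod n} (hr : c (j + 1) = c j)
    (hl : c (j - 1) = c j) {v : ZMod n} (hv : c v ≠ c j) :
    c (v + 1) ≠ c v ∧ c (v - 1) ≠ c v := by
  have h1 : (1 : ZMod n) ≠ 0 := by
    exact_mod_cast ZMod.natCast_ne_zero_of_pos_of_lt one_pos (by omega)
  have hvj : v ≠ j := by rintro rfl; exact hv rfl
  have hvr : v - 1 ≠ j := by rintro rfl; exact hv (by simpa using hr)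
  have hvl : v + 1 ≠ j := by rintro rfl; exact hv (by simpa using hl)
  by_contra! hcon
  -- `j` has utility `0` and would get `2`; `v` has utility at most `1` and would get at least `1`.
  refine heq j v hv.symm ⟨?_, ?_⟩ <;>
    simp only [usharp_cycleZMod hn, swapColoring, add_eq_left, sub_eq_self, h1, hvj, hvr, hvl,
      if_false] <;> grind

lemma Equilibrium.cycleZMod_three_mul_card_mono_le (hn : 3 ≤ n)
    (heq : Equilibrium (Usharp (cycleZMod n)) c)
    (hblock : ∀ j, c (j + 1) = c j → c (j - 1) ≠ c j) : 3 * #{v | c (v + 1) = c v} ≤ n := by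
  have hgap : ∀ v, c (v + 1) = c v → c (v + 1 + 1) ≠ c (v + 1) := fun v hv hv₁ =>
    hblock (v + 1) hv₁ (by simpa using hv.symm)
  apply three_mul_card_le_of_add_one_add_two_notMem <;>
    simp only [mem_filter, mem_univ, true_and]
  · exact hgap
  · intro v hv hv₂
    have e₁ : v + 1 + 1 = v + 2 := by ring
    have e₂ : v + 1 + 2 = v + 2 + 1 := by ring
    by_cases hmid : c (v + 2) = c (v + 1)
    · exact hgap v hv (by rwa [e₁])
    · exact heq.cycleZMod_not_aabb hn (v + 1) (by simpa using hv.symm) (by rwa [e₁])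
        (by rwa [e₁, e₂])

end Cycle

lemma Equilibrium.cycleZMod_two_mul_card_ne_le {n : ℕ} [NeZero n] (hn : 3 ≤ n)
    {c : ZMod n → Fin 2} (heq : Equilibrium (Usharp (cycleZMod n)) c) {j : ZMod n}
    (hr : c (j + 1) = c j) (hl : c (j - 1) = c j) :
    2 * #{v | c v ≠ c j} ≤ #{v | c (v + 1) ≠ c v} := by
  have hiso := fun v (hv : c v ≠ c j) => heq.cycleZMod_isolated_of_block hn hr hl hv
  apply two_mul_card_le_card_of_add_one_notMem <;> simp only [mem_filter, mem_univ, true_and]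
  · intro v hv hv₁
    exact (hiso v hv).1 (by omega)
  · intro v hv
    exact ⟨(hiso v hv).1, by simpa using (hiso v hv).2.symm⟩

theorem stmt13 (k : ℕ) (hk : 3 ≤ k) [NeZero (2 * k)] (c : ZMod (2 * k) → Fin 2)
    (hsize : ∀ i : Fin 2, ((Finset.univ : Finset (ZMod (2 * k))).filter fun v => c v = i).card = k)
    (heq : Equilibrium (Usharp (cycleZMod (2 * k))) c) :
    8 * k ≤ 3 * ∑ v, Usharp (cycleZMod (2 * k)) c v := by
  have hn : 3 ≤ 2 * k := by omega
  have hsplit (p : ZMod (2 * k) → Prop) [DecidablePred p] : #{v | p v} + #{v | ¬p v} = 2 * k := by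
    rw [card_filter_add_card_filter_not, card_univ, ZMod.card]
  rw [sum_usharp_cycleZMod hn]
  by_cases hblock : ∃ j, c (j + 1) = c j ∧ c (j - 1) = c j
  · obtain ⟨j, hr, hl⟩ := hblock
    have := heq.cycleZMod_two_mul_card_ne_le hn hr hl
    have : #{v | c v = c j} + #{v | c v ≠ c j} = 2 * k := hsplit _
    have := hsize (c j)
    omega
  · simp only [not_exists, not_and] at hblock
    have := heq.cycleZMod_three_mul_card_mono_le hn hblock
    have : #{v | c (v + 1) = c v} + #{v | c (v + 1) ≠ c v} = 2 * k := hsplit _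
    omega
end
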